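/- arXiv:2303.14497 — 2 statements merged into one kernel-verified Lean document; each statement's English description precedes it below -/
import Mathlib

section
/- Assume there exists M > 0 such that for all r ≥ 1: (i) r^{−8} ( ∫_1^r t³χ(t) dt ) ( ∫_1^r t³/χ(t) dt ) ≤ M; (ii) r^{−8} ∫_1^r t³χ(t) dt ≤ M; (iii) (max_{r≤t≤4r} χ(t)) / (min_{r≤t≤4r} χ(t)) ≤ M. Then ω_β belongs to the Muckenhoupt A₂ class on ℝ⁴, i.e. the supremum over all open balls B ⊂ ℝ⁴ of ( |B|^{−1} ∫_B ω_β(x) dx ) ( |B|^{−1} ∫_B ω_β(x)^{−1} dx ) is finite. -/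
open MeasureTheory Real Filter Topology

noncomputable section

abbrev E4 : Type := EuclideanSpace ℝ (Fin 4)

/-- The radial weight `ω_β` on `ℝ⁴`. -/
def omegaB (β : ℝ) (χ : ℝ → ℝ) (x : E4) : ℝ :=
  if ‖x‖ < 1 then (Real.log (Real.exp 1 / ‖x‖)) ^ β else χ ‖x‖

/-- A function on `ℝ⁴` is radial if its value depends only on the norm. -/
def IsRadial (u : E4 → ℝ) : Prop := ∀ x y : E4, ‖x‖ = ‖y‖ → u x = u y

/-- The Laplacian of a function on `ℝ⁴`. -/
def lap (f : E4 → ℝ) (x : E4) : ℝ :=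
  ∑ i : Fin 4, fderiv ℝ (fun y => fderiv ℝ f y (EuclideanSpace.single i 1)) x
    (EuclideanSpace.single i 1)

/-- `v` is a weak Laplacian of `u`. -/
def IsWeakLap (u v : E4 → ℝ) : Prop :=
  LocallyIntegrable v volume ∧
  ∀ φ : E4 → ℝ, ContDiff ℝ (⊤ : ℕ∞) φ → HasCompactSupport φ →
    ∫ x, u x * lap φ x = ∫ x, v x * φ x

/-- Membership in the weighted space `X_β` (with weak Laplacian `v`). -/
def MemX (β : ℝ) (χ : ℝ → ℝ) (u v : E4 → ℝ) : Prop :=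
  IsRadial u ∧ MemLp u (ENNReal.ofReal (2 / (1 - β))) volume ∧
  IsWeakLap u v ∧ Integrable (fun x => omegaB β χ x * (v x) ^ 2) volume

/-- `‖u‖_β`, expressed through the weak Laplacian `v` of `u`. -/
def normB (β : ℝ) (χ : ℝ → ℝ) (v : E4 → ℝ) : ℝ :=
  Real.sqrt (∫ x, omegaB β χ x * (v x) ^ 2)

/-- The critical constant `α_β`. -/
def alphaB (β : ℝ) : ℝ := 4 * (8 * π ^ 2 * (1 - β)) ^ ((1 : ℝ) / (1 - β))

/-- Standing hypotheses on `χ`. -/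
def ChiHyp (χ : ℝ → ℝ) : Prop :=
  ContinuousOn χ (Set.Ici 1) ∧ χ 1 = 1 ∧ (∀ t, 1 ≤ t → 0 < χ t) ∧
  ∃ c > 0, ∀ t, 1 ≤ t → c ≤ χ t

/-- Condition (D1). -/
def CondD1 (β : ℝ) (χ : ℝ → ℝ) : Prop :=
  ∃ C > 0, ∀ k : ℕ, 1 ≤ k →
    (∫ r in Set.Ioi (1 : ℝ),
      r ^ 3 * (∫ y in Set.Ioi r, 1 / (χ y * y)) ^ ((k : ℝ) / (1 - β))) ≤ C ^ k

/-- Condition (D2). -/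
def CondD2 (β : ℝ) (χ : ℝ → ℝ) : Prop :=
  ∃ C > 0, ∀ k : ℕ, 1 ≤ k →
    (∫ r in Set.Ioi (1 : ℝ),
      r ^ ((3 : ℝ) - 2 * k / (1 - β)) *
        (∫ y in Set.Ioc (1 : ℝ) r, y / χ y) ^ ((k : ℝ) / (1 - β))) ≤ C ^ k

/-- `F(s) = ∫₀^s f(t) dt`. -/
def Ffun (f : ℝ → ℝ) (s : ℝ) : ℝ := ∫ t in (0 : ℝ)..s, f t

/-- The energy functional `I_β`, expressed through the weak Laplacian `v` of `u`. -/
def Ibeta (β : ℝ) (χ : ℝ → ℝ) (f : ℝ → ℝ) (u v : E4 → ℝ) : ℝ :=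
  (1 / 2) * (∫ x, omegaB β χ x * (v x) ^ 2) - ∫ x, Ffun f (u x)

/-- Standing hypotheses on `f`. -/
def FHyp (f : ℝ → ℝ) : Prop :=
  Continuous f ∧ (∀ s ≤ 0, f s = 0) ∧ ∀ s, 0 ≤ f s

/-- Condition (F1). -/
def CondF1 (β c₀ p q α : ℝ) (f : ℝ → ℝ) : Prop :=
  0 < c₀ ∧ 2 / (1 - β) < p ∧ 2 / (1 - β) < q ∧ 0 < α ∧
  ∀ s : ℝ, |f s| ≤
    c₀ * (|s| ^ (p - 1) + |s| ^ (q - 1) * (Real.exp (α * |s| ^ (2 / (1 - β))) - 1))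

/-- Condition (F2). -/
def CondF2 (f : ℝ → ℝ) : Prop :=
  ∃ M₀ > 0, ∃ s₀ > 0, ∀ s ≥ s₀, Ffun f s ≤ M₀ * f s

/-- Condition (F3): `liminf_{s→∞} f(s) s e^{-α s^{2/(1-β)}} ≥ κ` for some admissible `κ`. -/
def CondF3 (β α : ℝ) (f : ℝ → ℝ) : Prop :=
  ∃ κ : ℝ, (2 / (π ^ 2 * Real.exp 1 ^ 4)) * (alphaB β / α) ^ (1 - β) < κ ∧
    ∀ ε > 0, ∃ s₁ : ℝ, ∀ s ≥ s₁, κ - ε ≤ f s * s * Real.exp (-(α * s ^ (2 / (1 - β))))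

/-- A `(PS)_m` sequence for `I_β` (with Laplacians `W n` of `U n`). -/
def IsPSSeq (β : ℝ) (χ f : ℝ → ℝ) (m : ℝ) (U W : ℕ → E4 → ℝ) : Prop :=
  (∀ n, MemX β χ (U n) (W n)) ∧
  Tendsto (fun n => Ibeta β χ f (U n) (W n)) atTop (nhds m) ∧
  ∃ δ : ℕ → ℝ, Tendsto δ atTop (nhds 0) ∧
    ∀ n, ∀ v w : E4 → ℝ, MemX β χ v w → (∫ x, omegaB β χ x * (w x) ^ 2) ≤ 1 →
      |(∫ x, omegaB β χ x * W n x * w x) - ∫ x, f (U n x) * v x| ≤ δ n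

/-!
A ball whose radius is at most half the norm of its centre lies in the annulus
`‖x₀‖/2 ≤ ‖x‖ ≤ 3‖x₀‖/2`, on which the weight varies by a bounded factor: near the origin because
`log (e/s) ≤ k log (e/(k s))` for `k ≥ 1`, elsewhere by (iii). Any other ball `B(x₀, r)` lies in
`B(0, 3r)`, of comparable volume, and on centred balls polar coordinates turn the A₂ product into
a product of the moments `∫₀^R y³ ω^{±1}`. For `R ≤ 1` the bound
`log (e/y)^β ≤ (R/y) log (e/R)^β` makes them at most `log (e/R)^{±β} R⁴`; for `R > 1` conditions
(i), (ii) and `χ ≥ c` bound their product by a multiple of `R⁸`.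
-/

open scoped ENNReal
open Set Metric Module

section A2

variable {α : Type*} [MeasurableSpace α]

def a2Product (μ : Measure α) (w : α → ℝ) (s : Set α) : ℝ :=
  ((μ.real s)⁻¹ * ∫ x in s, w x ∂μ) * ((μ.real s)⁻¹ * ∫ x in s, (w x)⁻¹ ∂μ)

variable {μ : Measure α} {w : α → ℝ} {s t : Set α}

theorem setIntegral_le_of_setLIntegral_le (hst : s ⊆ t) {A : ℝ} (hA : 0 ≤ A)
    (h : ∫⁻ x in t, ENNReal.ofReal ‖w x‖ ∂μ ≤ ENNReal.ofReal A) :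
    ∫ x in s, w x ∂μ ≤ A :=
  calc ∫ x in s, w x ∂μ ≤ ‖∫ x in s, w x ∂μ‖ := Real.le_norm_self _
    _ ≤ (∫⁻ x in s, ENNReal.ofReal ‖w x‖ ∂μ).toReal := norm_integral_le_lintegral_norm _
    _ ≤ (ENNReal.ofReal A).toReal :=
      ENNReal.toReal_mono ENNReal.ofReal_ne_top ((lintegral_mono_set hst).trans h)
    _ = A := ENNReal.toReal_ofReal hA

theorem a2Product_le_of_setLIntegral_le (hw : 0 ≤ w) (hst : s ⊆ t) {A B : ℝ} (hA : 0 ≤ A)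
    (hB : 0 ≤ B) (hwA : ∫⁻ x in t, ENNReal.ofReal ‖w x‖ ∂μ ≤ ENNReal.ofReal A)
    (hwB : ∫⁻ x in t, ENNReal.ofReal ‖(w x)⁻¹‖ ∂μ ≤ ENNReal.ofReal B) :
    a2Product μ w s ≤ A * B / μ.real s ^ 2 := by
  have hV : 0 ≤ (μ.real s)⁻¹ := inv_nonneg.2 measureReal_nonneg
  calc a2Product μ w s ≤ ((μ.real s)⁻¹ * A) * ((μ.real s)⁻¹ * B) := by
        unfold a2Product
        gcongr
        · exact mul_nonneg hV (integral_nonneg fun x => inv_nonneg.2 (hw x))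
        · exact setIntegral_le_of_setLIntegral_le hst hA hwA
        · exact setIntegral_le_of_setLIntegral_le hst hB hwB
    _ = A * B / μ.real s ^ 2 := by ring

theorem setIntegral_le_mul_measureReal (hs : μ s ≠ ∞) {K : ℝ} (hw : ∀ x ∈ s, |w x| ≤ K) :
    ∫ x in s, w x ∂μ ≤ K * μ.real s :=
  (Real.le_norm_self _).trans (norm_setIntegral_le_of_norm_le_const hs.lt_top hw)

theorem a2Product_le_sq_of_le_mul (hsm : MeasurableSet s) (hs : μ s ≠ ∞) {C : ℝ}
    (hpos : ∀ x ∈ s, 0 < w x) (hC : ∀ x ∈ s, ∀ y ∈ s, w x ≤ C * w y) : a2Product μ w s ≤ C ^ 2 := by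
  rcases s.eq_empty_or_nonempty with rfl | ⟨y₀, hy₀⟩
  · simp [a2Product, sq_nonneg]
  have hw₀ := hpos y₀ hy₀
  have hC₀ : 0 ≤ C := nonneg_of_mul_nonneg_left (hw₀.le.trans (hC y₀ hy₀ y₀ hy₀)) hw₀
  have hint : ∫ x in s, w x ∂μ ≤ C * w y₀ * μ.real s :=
    setIntegral_le_mul_measureReal hs fun x hx => by
      rw [abs_of_pos (hpos x hx)]
      exact hC x hx y₀ hy₀
  have hint_inv : ∫ x in s, (w x)⁻¹ ∂μ ≤ C * (w y₀)⁻¹ * μ.real s :=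
    setIntegral_le_mul_measureReal hs fun x hx => by
      have hx₀ := hC y₀ hy₀ x hx
      have hx := hpos x hx
      rw [abs_of_pos (inv_pos.2 hx)]
      field_simp
      linarith
  rcases (measureReal_nonneg (μ := μ) (s := s)).eq_or_lt with hV | hV
  · simp only [a2Product, ← hV, inv_zero, zero_mul, mul_zero]
    positivity
  calc a2Product μ w s ≤ (C * w y₀) * (C * (w y₀)⁻¹) := by
        refine mul_le_mul ?_ ?_ ?_ (by positivity)
        · rwa [inv_mul_le_iff₀ hV, mul_comm]
        · rwa [inv_mul_le_iff₀ hV, mul_comm]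
        · exact mul_nonneg (by positivity)
            (setIntegral_nonneg hsm fun x hx => (inv_pos.2 (hpos x hx)).le)
    _ = C ^ 2 := by field_simp

end A2

section Polar

variable {E : Type*} [NormedAddCommGroup E] [NormedSpace ℝ E] [FiniteDimensional ℝ E]
  [MeasurableSpace E] [BorelSpace E] [Nontrivial E] (μ : Measure E) [μ.IsAddHaarMeasure]

theorem lintegral_comp_norm {f : ℝ → ℝ≥0∞} (hf : Measurable f) :
    ∫⁻ x, f ‖x‖ ∂μ = finrank ℝ E * μ (ball 0 1) *
      ∫⁻ y in Ioi (0 : ℝ), ENNReal.ofReal (y ^ (finrank ℝ E - 1)) * f y := by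
  have hfm : Measurable fun p : sphere (0 : E) 1 × Ioi (0 : ℝ) => f p.2 :=
    hf.comp (measurable_subtype_coe.comp measurable_snd)
  calc ∫⁻ x, f ‖x‖ ∂μ = ∫⁻ x : ({0}ᶜ : Set E), f ‖(x : E)‖ ∂μ.comap Subtype.val := by
        rw [lintegral_subtype_comap (measurableSet_singleton 0).compl fun x => f ‖x‖,
          restrict_compl_singleton]
    _ = ∫⁻ p, f p.2 ∂μ.toSphere.prod (Measure.volumeIoiPow (finrank ℝ E - 1)) := by
        simpa using (μ.measurePreserving_homeomorphUnitSphereProd.lintegral_comp hfm)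
    _ = _ := by
        rw [lintegral_prod _ hfm.aemeasurable]
        simp only [lintegral_const]
        rw [Measure.toSphere_apply_univ,
          Measure.volumeIoiPow, lintegral_withDensity_eq_lintegral_mul _
            (measurable_subtype_coe.pow_const _).ennreal_ofReal
            (g := fun y : Ioi (0 : ℝ) => f y) (hf.comp measurable_subtype_coe), mul_comm,
          ← lintegral_subtype_comap measurableSet_Ioi]
        rfl

theorem lintegral_ball_comp_norm {f : ℝ → ℝ≥0∞} (hf : Measurable f) (R : ℝ) :
    ∫⁻ x in ball (0 : E) R, f ‖x‖ ∂μ = finrank ℝ E * μ (ball 0 1) *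
      ∫⁻ y in Ioo 0 R, ENNReal.ofReal (y ^ (finrank ℝ E - 1)) * f y := by
  have hball : (ball (0 : E) R).indicator (fun x => f ‖x‖) = fun x => (Iio R).indicator f ‖x‖ := by
    ext x
    simp only [indicator, mem_ball_zero_iff, mem_Iio]
  rw [← lintegral_indicator measurableSet_ball, hball,
    lintegral_comp_norm μ (hf.indicator measurableSet_Iio), ← Ioi_inter_Iio, inter_comm,
    ← Measure.restrict_restrict measurableSet_Iio, ← lintegral_indicator measurableSet_Iio]
  congr 2 with y
  simp only [indicator, mem_Iio]
  split_ifs <;> simp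

end Polar

section Doubling

variable {E : Type*} [NormedAddCommGroup E] [NormedSpace ℝ E] [FiniteDimensional ℝ E]
  [MeasurableSpace E] [BorelSpace E] [Nontrivial E] {μ : Measure E} [μ.IsAddHaarMeasure]

theorem measureReal_ball_eq (x : E) {r : ℝ} (hr : 0 ≤ r) :
    μ.real (ball x r) = r ^ finrank ℝ E * μ.real (ball 0 1) := by
  rw [measureReal_def, Measure.addHaar_ball μ x hr, ENNReal.toReal_mul,
    ENNReal.toReal_ofReal (by positivity), measureReal_def]

theorem a2Product_ball_le_of_centered {w : E → ℝ} (hw : 0 ≤ w) {C : ℝ}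
    (hC : ∀ R > 0, ∃ A B, 0 ≤ A ∧ 0 ≤ B ∧ A * B ≤ C * R ^ (2 * finrank ℝ E) ∧
      ∫⁻ x in ball 0 R, ENNReal.ofReal ‖w x‖ ∂μ ≤ ENNReal.ofReal A ∧
      ∫⁻ x in ball 0 R, ENNReal.ofReal ‖(w x)⁻¹‖ ∂μ ≤ ENNReal.ofReal B)
    {x₀ : E} {r : ℝ} (hr : 0 < r) (hx₀ : ‖x₀‖ ≤ 2 * r) :
    a2Product μ w (ball x₀ r) ≤ C * 3 ^ (2 * finrank ℝ E) / μ.real (ball 0 1) ^ 2 := by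
  obtain ⟨A, B, hA, hB, hAB, hwA, hwB⟩ := hC (3 * r) (by positivity)
  have hsub : ball x₀ r ⊆ ball 0 (3 * r) := by
    refine ball_subset_ball' ?_
    rw [dist_zero_right]
    linarith
  have hv : 0 < μ.real (ball (0 : E) 1) :=
    ENNReal.toReal_pos (measure_ball_pos μ 0 one_pos).ne' measure_ball_lt_top.ne
  calc a2Product μ w (ball x₀ r) ≤ A * B / μ.real (ball x₀ r) ^ 2 :=
        a2Product_le_of_setLIntegral_le hw hsub hA hB hwA hwB
    _ ≤ C * (3 * r) ^ (2 * finrank ℝ E) / (r ^ finrank ℝ E * μ.real (ball 0 1)) ^ 2 := by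
        rw [measureReal_ball_eq x₀ hr.le]
        gcongr
    _ = C * 3 ^ (2 * finrank ℝ E) / μ.real (ball 0 1) ^ 2 := by
        field_simp
        ring

end Doubling

theorem le_mul_of_sSup_div_sInf_le {α : Type*} [TopologicalSpace α] {g : α → ℝ} {S : Set α}
    (hS : IsCompact S) (hg : ContinuousOn g S) (hpos : ∀ t ∈ S, 0 < g t) {M : ℝ}
    (hM : sSup (g '' S) / sInf (g '' S) ≤ M) : ∀ s ∈ S, ∀ t ∈ S, g s ≤ M * g t := by
  intro s hs t ht
  have hgS := hS.image_of_continuousOn hg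
  obtain ⟨t₀, ht₀, hinf⟩ := hgS.sInf_mem ⟨g s, mem_image_of_mem g hs⟩
  have hinf_pos : 0 < sInf (g '' S) := hinf ▸ hpos t₀ ht₀
  have hsup : sSup (g '' S) ≤ M * sInf (g '' S) := (div_le_iff₀ hinf_pos).1 hM
  have hM0 : 0 ≤ M := by
    refine le_trans (div_nonneg ?_ hinf_pos.le) hM
    exact (hpos s hs).le.trans (le_csSup hgS.bddAbove (mem_image_of_mem g hs))
  calc g s ≤ sSup (g '' S) := le_csSup hgS.bddAbove (mem_image_of_mem g hs)
    _ ≤ M * sInf (g '' S) := hsup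
    _ ≤ M * g t := by gcongr; exact csInf_le hgS.bddBelow (mem_image_of_mem g ht)

theorem norm_mem_Icc_of_mem_ball {E : Type*} [SeminormedAddCommGroup E] {x x₀ : E} {r : ℝ}
    (hx : x ∈ ball x₀ r) (hr : r ≤ ‖x₀‖ / 2) : ‖x‖ ∈ Icc (‖x₀‖ / 2) (3 * ‖x₀‖ / 2) := by
  rw [mem_ball, dist_eq_norm] at hx
  have h₁ := norm_sub_norm_le x x₀
  have h₂ := norm_sub_norm_le x₀ x
  rw [norm_sub_rev] at h₂
  constructor <;> linarith

theorem one_le_log_exp_one_div {t : ℝ} (h0 : 0 < t) (h1 : t ≤ 1) : 1 ≤ log (exp 1 / t) := by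
  rw [le_log_iff_exp_le (by positivity), le_div_iff₀ h0]
  nlinarith [exp_pos 1]

theorem log_exp_one_div_le_log_exp_one_div {s t : ℝ} (hs : 0 < s) (hst : s ≤ t) :
    log (exp 1 / t) ≤ log (exp 1 / s) :=
  log_le_log (div_pos (exp_pos 1) (hs.trans_le hst))
    (div_le_div_of_nonneg_left (exp_pos 1).le hs hst)

theorem log_exp_one_div_le_mul {k s : ℝ} (hk : 1 ≤ k) (hs : 0 < s) (hks : k * s ≤ 1) :
    log (exp 1 / s) ≤ k * log (exp 1 / (k * s)) := by
  have hL := one_le_log_exp_one_div (by positivity) hks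
  have hsplit : log (exp 1 / s) = log k + log (exp 1 / (k * s)) := by
    rw [← log_mul (by positivity) (by positivity)]
    field_simp
  have hlogk := log_le_sub_one_of_pos (by linarith : 0 < k)
  nlinarith

theorem rpow_log_exp_one_div_le_rpow_log_exp_one_div {β s t : ℝ} (hβ0 : 0 ≤ β) (hs : 0 < s)
    (hst : s ≤ t) (ht : t ≤ 1) : log (exp 1 / t) ^ β ≤ log (exp 1 / s) ^ β :=
  rpow_le_rpow (by linarith [one_le_log_exp_one_div (hs.trans_le hst) ht])
    (log_exp_one_div_le_log_exp_one_div hs hst) hβ0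

theorem rpow_log_exp_one_div_le_mul {β k s : ℝ} (hβ0 : 0 ≤ β) (hβ1 : β ≤ 1) (hk : 1 ≤ k)
    (hs : 0 < s) (hks : k * s ≤ 1) :
    log (exp 1 / s) ^ β ≤ k * log (exp 1 / (k * s)) ^ β := by
  have hL := one_le_log_exp_one_div (by positivity) hks
  calc log (exp 1 / s) ^ β ≤ (k * log (exp 1 / (k * s))) ^ β :=
        rpow_le_rpow (by linarith [one_le_log_exp_one_div hs (by nlinarith)])
          (log_exp_one_div_le_mul hk hs hks) hβ0
    _ = k ^ β * log (exp 1 / (k * s)) ^ β := mul_rpow (by linarith) (by linarith)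
    _ ≤ k * log (exp 1 / (k * s)) ^ β := by
        gcongr
        exact rpow_le_self_of_one_le hk hβ1

section Profile

variable {β : ℝ} {χ : ℝ → ℝ} {s t : ℝ}

/-- The `max` changes nothing on `[1, ∞)` but makes the profile measurable, `χ` being only known to
be continuous on `[1, ∞)`. -/
def weightProfile (β : ℝ) (χ : ℝ → ℝ) (t : ℝ) : ℝ :=
  if t < 1 then log (exp 1 / t) ^ β else χ (max t 1)

theorem omegaB_eq_weightProfile (x : E4) : omegaB β χ x = weightProfile β χ ‖x‖ := by
  unfold omegaB weightProfile
  split_ifs with h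
  · rfl
  · rw [max_eq_left (not_lt.1 h)]

theorem weightProfile_of_lt_one (ht : t < 1) : weightProfile β χ t = log (exp 1 / t) ^ β :=
  if_pos ht

theorem weightProfile_of_one_le (ht : 1 ≤ t) : weightProfile β χ t = χ t := by
  rw [weightProfile, if_neg (not_lt.2 ht), max_eq_left ht]

theorem weightProfile_of_le_one (hχ1 : χ 1 = 1) (ht : t ≤ 1) :
    weightProfile β χ t = log (exp 1 / t) ^ β := by
  rcases ht.lt_or_eq with ht | rfl
  · exact weightProfile_of_lt_one ht
  · rw [weightProfile_of_one_le le_rfl, hχ1, div_one, log_exp, one_rpow]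

theorem measurable_weightProfile (hχ : ContinuousOn χ (Ici 1)) :
    Measurable (weightProfile β χ) :=
  Measurable.ite measurableSet_Iio
    ((measurable_log.comp (measurable_const.div measurable_id)).pow_const β)
    (hχ.comp_continuous (continuous_id.max continuous_const)
      fun t => le_max_right t 1).measurable

theorem weightProfile_pos (hχ : ∀ t, 1 ≤ t → 0 < χ t) (ht : 0 < t) :
    0 < weightProfile β χ t := by
  rcases lt_or_ge t 1 with h1 | h1
  · rw [weightProfile_of_lt_one h1]
    exact rpow_pos_of_pos (by linarith [one_le_log_exp_one_div ht h1.le]) β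
  · rw [weightProfile_of_one_le h1]
    exact hχ t h1

theorem omegaB_nonneg (hχ : ∀ t, 1 ≤ t → 0 < χ t) (x : E4) : 0 ≤ omegaB β χ x := by
  rw [omegaB_eq_weightProfile]
  rcases (norm_nonneg x).eq_or_lt with h | h
  · rw [← h, weightProfile_of_lt_one one_pos, div_zero, log_zero]
    exact zero_rpow_nonneg β
  · exact (weightProfile_pos hχ h).le

end Profile

section Annulus

variable {β : ℝ} {χ : ℝ → ℝ} {a s t M : ℝ}

theorem weightProfile_le_three_mul (hχ1 : χ 1 = 1) (hβ0 : 0 ≤ β) (hβ1 : β ≤ 1) (ha : 0 < a)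
    (ha1 : 3 * a / 2 ≤ 1) (hs : s ∈ Icc (a / 2) (3 * a / 2)) (ht : t ∈ Icc (a / 2) (3 * a / 2)) :
    weightProfile β χ s ≤ 3 * weightProfile β χ t := by
  rw [weightProfile_of_le_one hχ1 (hs.2.trans ha1), weightProfile_of_le_one hχ1 (ht.2.trans ha1)]
  calc log (exp 1 / s) ^ β ≤ log (exp 1 / (a / 2)) ^ β :=
        rpow_log_exp_one_div_le_rpow_log_exp_one_div hβ0 (by positivity) hs.1 (hs.2.trans ha1)
    _ ≤ 3 * log (exp 1 / (3 * (a / 2))) ^ β :=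
        rpow_log_exp_one_div_le_mul hβ0 hβ1 (by norm_num) (by positivity) (by linarith)
    _ ≤ 3 * log (exp 1 / t) ^ β := by
        gcongr 3 * ?_
        exact rpow_log_exp_one_div_le_rpow_log_exp_one_div hβ0 (by linarith [ht.1])
          (by linarith [ht.2]) (by linarith)

theorem weightProfile_mem_Icc (hχc : ContinuousOn χ (Ici 1)) (hχ1 : χ 1 = 1)
    (hχpos : ∀ t, 1 ≤ t → 0 < χ t) (hβ0 : 0 ≤ β) (hβ1 : β ≤ 1) (hM0 : 0 < M)
    (hM : sSup (χ '' Icc 1 (4 * 1)) / sInf (χ '' Icc 1 (4 * 1)) ≤ M) (ht : t ∈ Icc (1 / 3) 3) :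
    weightProfile β χ t ∈ Icc (min 1 M⁻¹) (max (1 + log 3) M) := by
  rcases lt_or_ge t 1 with h1 | h1
  · have hL := one_le_log_exp_one_div (by linarith [ht.1]) h1.le
    have hL3 : log (exp 1 / t) ≤ 1 + log 3 := by
      calc log (exp 1 / t) ≤ log (exp 1 / (1 / 3)) :=
            log_exp_one_div_le_log_exp_one_div (by norm_num) ht.1
        _ = 1 + log 3 := by
            rw [div_div_eq_mul_div, div_one, log_mul (exp_pos 1).ne' (by norm_num), log_exp]
    rw [weightProfile_of_lt_one h1]
    exact ⟨(min_le_left _ _).trans (one_le_rpow hL hβ0),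
      ((rpow_le_self_of_one_le hL hβ1).trans hL3).trans (le_max_left _ _)⟩
  · have hcomp := le_mul_of_sSup_div_sInf_le isCompact_Icc (hχc.mono fun u hu => hu.1)
      (fun u hu => hχpos u hu.1) hM
    have hmem : t ∈ Icc 1 (4 * 1) := ⟨h1, by linarith [ht.2]⟩
    have hupper := hcomp t hmem 1 ⟨le_rfl, by norm_num⟩
    have hlower := hcomp 1 ⟨le_rfl, by norm_num⟩ t hmem
    rw [hχ1, mul_one] at hupper
    rw [hχ1, ← div_le_iff₀' hM0, one_div] at hlower
    rw [weightProfile_of_one_le h1]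
    exact ⟨(min_le_right _ _).trans hlower, hupper.trans (le_max_right _ _)⟩

theorem weightProfile_le_mul_of_two_le (hχc : ContinuousOn χ (Ici 1))
    (hχpos : ∀ t, 1 ≤ t → 0 < χ t)
    (hM : ∀ r, 1 ≤ r → sSup (χ '' Icc r (4 * r)) / sInf (χ '' Icc r (4 * r)) ≤ M) (ha : 2 ≤ a)
    (hs : s ∈ Icc (a / 2) (3 * a / 2)) (ht : t ∈ Icc (a / 2) (3 * a / 2)) :
    weightProfile β χ s ≤ M * weightProfile β χ t := by
  have h1 : 1 ≤ a / 2 := by linarith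
  rw [weightProfile_of_one_le (h1.trans hs.1), weightProfile_of_one_le (h1.trans ht.1)]
  exact le_mul_of_sSup_div_sInf_le isCompact_Icc (hχc.mono fun u hu => h1.trans hu.1)
    (fun u hu => hχpos u (h1.trans hu.1)) (hM _ h1) s ⟨hs.1, by linarith [hs.2]⟩
    t ⟨ht.1, by linarith [ht.2]⟩

theorem exists_weightProfile_le_mul_on_annulus (hχc : ContinuousOn χ (Ici 1)) (hχ1 : χ 1 = 1)
    (hχpos : ∀ t, 1 ≤ t → 0 < χ t) (hβ0 : 0 ≤ β) (hβ1 : β ≤ 1) (hM0 : 0 < M)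
    (hM : ∀ r, 1 ≤ r → sSup (χ '' Icc r (4 * r)) / sInf (χ '' Icc r (4 * r)) ≤ M) :
    ∃ C, ∀ a > 0, ∀ s ∈ Icc (a / 2) (3 * a / 2), ∀ t ∈ Icc (a / 2) (3 * a / 2),
      weightProfile β χ s ≤ C * weightProfile β χ t := by
  set m := min 1 M⁻¹
  set K := max (1 + log 3) M
  have hm : 0 < m := lt_min one_pos (inv_pos.2 hM0)
  have hK : 0 ≤ K := hM0.le.trans (le_max_right _ _)
  refine ⟨3 + M + K / m, fun a ha s hs t ht => ?_⟩
  have hpt := (weightProfile_pos (β := β) hχpos (by linarith [ht.1] : 0 < t)).le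
  suffices ∃ C' ≤ 3 + M + K / m, weightProfile β χ s ≤ C' * weightProfile β χ t by
    obtain ⟨C', hC', h⟩ := this
    exact h.trans (mul_le_mul_of_nonneg_right hC' hpt)
  have hKm : 0 ≤ K / m := div_nonneg hK hm.le
  rcases le_or_gt a (2 / 3) with ha₁ | ha₁
  · exact ⟨3, by linarith, weightProfile_le_three_mul hχ1 hβ0 hβ1 ha (by linarith) hs ht⟩
  rcases lt_or_ge a 2 with ha₂ | ha₂
  · have hI : Icc (a / 2) (3 * a / 2) ⊆ Icc (1 / 3) 3 := Icc_subset_Icc (by linarith) (by linarith)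
    have hps := weightProfile_mem_Icc hχc hχ1 hχpos hβ0 hβ1 hM0 (hM 1 le_rfl) (hI hs)
    have hpt' := weightProfile_mem_Icc hχc hχ1 hχpos hβ0 hβ1 hM0 (hM 1 le_rfl) (hI ht)
    refine ⟨K / m, by linarith, ?_⟩
    calc weightProfile β χ s ≤ K / m * m := by rw [div_mul_cancel₀ K hm.ne']; exact hps.2
      _ ≤ K / m * weightProfile β χ t := mul_le_mul_of_nonneg_left hpt'.1 hKm
  · exact ⟨M, by linarith, weightProfile_le_mul_of_two_le hχc hχpos hM ha₂ hs ht⟩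

theorem exists_a2Product_omegaB_le_of_le_half_norm (hχc : ContinuousOn χ (Ici 1))
    (hχ1 : χ 1 = 1) (hχpos : ∀ t, 1 ≤ t → 0 < χ t) (hβ0 : 0 ≤ β) (hβ1 : β ≤ 1) (hM0 : 0 < M)
    (hM : ∀ r, 1 ≤ r → sSup (χ '' Icc r (4 * r)) / sInf (χ '' Icc r (4 * r)) ≤ M) :
    ∃ C, ∀ (x₀ : E4) (r : ℝ), r ≤ ‖x₀‖ / 2 → a2Product volume (omegaB β χ) (ball x₀ r) ≤ C := by
  obtain ⟨C, hC⟩ := exists_weightProfile_le_mul_on_annulus hχc hχ1 hχpos hβ0 hβ1 hM0 hM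
  refine ⟨C ^ 2, fun x₀ r hr => ?_⟩
  have ha : ∀ x ∈ ball x₀ r, 0 < ‖x₀‖ := fun x hx => by
    linarith [dist_nonneg (x := x) (y := x₀), mem_ball.1 hx]
  refine a2Product_le_sq_of_le_mul measurableSet_ball measure_ball_lt_top.ne
    (fun x hx => ?_) (fun x hx y hy => ?_) <;> simp only [omegaB_eq_weightProfile]
  · refine weightProfile_pos hχpos ?_
    linarith [(norm_mem_Icc_of_mem_ball hx hr).1, ha x hx]
  · exact hC _ (ha x hx) _ (norm_mem_Icc_of_mem_ball hx hr) _ (norm_mem_Icc_of_mem_ball hy hr)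

end Annulus

section Moments

variable {β : ℝ} {χ : ℝ → ℝ} {R : ℝ}

theorem setLIntegral_Ioo_le_ofReal {F : ℝ → ℝ≥0∞} {K : ℝ} (hK : 0 ≤ K)
    (h : ∀ y ∈ Ioo 0 R, F y ≤ ENNReal.ofReal K) :
    ∫⁻ y in Ioo 0 R, F y ≤ ENNReal.ofReal (K * R) :=
  calc ∫⁻ y in Ioo 0 R, F y ≤ ∫⁻ _ in Ioo 0 R, ENNReal.ofReal K :=
        setLIntegral_mono' measurableSet_Ioo h
    _ = ENNReal.ofReal (K * R) := by
        rw [setLIntegral_const, Real.volume_Ioo, sub_zero, ENNReal.ofReal_mul hK]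

theorem lintegral_weightProfile_le_of_le_one (hβ0 : 0 ≤ β) (hβ1 : β ≤ 1) (hR0 : 0 < R)
    (hR1 : R ≤ 1) :
    ∫⁻ y in Ioo 0 R, ENNReal.ofReal (y ^ 3) * ENNReal.ofReal ‖weightProfile β χ y‖ ≤
      ENNReal.ofReal (log (exp 1 / R) ^ β * R ^ 4) := by
  set L := log (exp 1 / R) ^ β
  have hL : 0 ≤ L := rpow_nonneg (by linarith [one_le_log_exp_one_div hR0 hR1]) β
  have h := setLIntegral_Ioo_le_ofReal (F := fun y =>
    ENNReal.ofReal (y ^ 3) * ENNReal.ofReal ‖weightProfile β χ y‖) (R := R) (K := L * R ^ 3)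
    (by positivity) fun y ⟨hy0, hyR⟩ => by
      have hp : weightProfile β χ y ≤ R / y * L := by
        have := rpow_log_exp_one_div_le_mul hβ0 hβ1 ((one_le_div hy0).2 hyR.le) hy0
          (by rwa [div_mul_cancel₀ R hy0.ne'])
        rwa [div_mul_cancel₀ R hy0.ne', ← weightProfile_of_lt_one (χ := χ) (hyR.trans_le hR1)]
          at this
      have hp0 : 0 ≤ weightProfile β χ y := by
        rw [weightProfile_of_lt_one (hyR.trans_le hR1)]
        exact rpow_nonneg (by linarith [one_le_log_exp_one_div hy0 (hyR.le.trans hR1)]) β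
      rw [← ENNReal.ofReal_mul (by positivity), Real.norm_of_nonneg hp0]
      refine ENNReal.ofReal_le_ofReal ?_
      calc y ^ 3 * weightProfile β χ y ≤ y ^ 3 * (R / y * L) := by gcongr
        _ = L * R * y ^ 2 := by field_simp
        _ ≤ L * R * R ^ 2 := by gcongr
        _ = L * R ^ 3 := by ring
  convert h using 2
  ring

theorem lintegral_inv_weightProfile_le_of_le_one (hβ0 : 0 ≤ β) (hR0 : 0 < R) (hR1 : R ≤ 1) :
    ∫⁻ y in Ioo 0 R, ENNReal.ofReal (y ^ 3) * ENNReal.ofReal ‖(weightProfile β χ y)⁻¹‖ ≤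
      ENNReal.ofReal ((log (exp 1 / R) ^ β)⁻¹ * R ^ 4) := by
  set L := log (exp 1 / R) ^ β
  have hL : 0 < L := rpow_pos_of_pos (by linarith [one_le_log_exp_one_div hR0 hR1]) β
  have h := setLIntegral_Ioo_le_ofReal (F := fun y =>
    ENNReal.ofReal (y ^ 3) * ENNReal.ofReal ‖(weightProfile β χ y)⁻¹‖) (R := R) (K := L⁻¹ * R ^ 3)
    (by positivity) fun y ⟨hy0, hyR⟩ => by
      have hp : L ≤ weightProfile β χ y := by
        rw [weightProfile_of_lt_one (hyR.trans_le hR1)]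
        exact rpow_log_exp_one_div_le_rpow_log_exp_one_div hβ0 hy0 hyR.le hR1
      have hp0 := hL.trans_le hp
      rw [← ENNReal.ofReal_mul (by positivity), Real.norm_of_nonneg (inv_nonneg.2 hp0.le)]
      refine ENNReal.ofReal_le_ofReal ?_
      calc y ^ 3 * (weightProfile β χ y)⁻¹ ≤ R ^ 3 * L⁻¹ := by gcongr
        _ = L⁻¹ * R ^ 3 := mul_comm _ _
  convert h using 2
  ring

theorem lintegral_Ioo_le_add_integral_Ioc {F : ℝ → ℝ≥0∞} {g : ℝ → ℝ} {a : ℝ} (hR : 1 ≤ R)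
    (hg : ContinuousOn g (Icc 1 R)) (hg0 : ∀ t ∈ Icc 1 R, 0 ≤ g t)
    (hF : ∀ y ∈ Ico 1 R, F y = ENNReal.ofReal (y ^ 3 * g y)) (ha : 0 ≤ a)
    (h01 : ∫⁻ y in Ioo 0 1, F y ≤ ENNReal.ofReal a) :
    ∫⁻ y in Ioo 0 R, F y ≤ ENNReal.ofReal (a + ∫ t in Ioc 1 R, t ^ 3 * g t) := by
  have hint : IntegrableOn (fun t => t ^ 3 * g t) (Ioc 1 R) :=
    ((continuousOn_pow 3).mul hg).integrableOn_Icc.mono_set Ioc_subset_Icc_self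
  have hnonneg : 0 ≤ ∫ t in Ioc 1 R, t ^ 3 * g t :=
    setIntegral_nonneg measurableSet_Ioc fun t ht =>
      mul_nonneg (pow_nonneg (by linarith [ht.1]) 3) (hg0 t (Ioc_subset_Icc_self ht))
  have h1R : ∫⁻ y in Ico 1 R, F y = ENNReal.ofReal (∫ t in Ioc 1 R, t ^ 3 * g t) := by
    rw [setLIntegral_congr_fun measurableSet_Ico hF, setLIntegral_congr Ico_ae_eq_Ioc,
      ofReal_integral_eq_lintegral_ofReal hint]
    filter_upwards [ae_restrict_mem measurableSet_Ioc] with t ht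
    exact mul_nonneg (pow_nonneg (by linarith [ht.1]) 3) (hg0 t (Ioc_subset_Icc_self ht))
  rw [← Ioo_union_Ico_eq_Ioo zero_lt_one hR, lintegral_union measurableSet_Ico
    ((Iio_disjoint_Ici le_rfl).mono Ioo_subset_Iio_self Ico_subset_Ici_self), h1R,
    ENNReal.ofReal_add ha hnonneg]
  gcongr

theorem lintegral_weightProfile_le_of_one_le (hχc : ContinuousOn χ (Ici 1))
    (hχpos : ∀ t, 1 ≤ t → 0 < χ t) (hβ0 : 0 ≤ β) (hβ1 : β ≤ 1) (hR : 1 ≤ R) :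
    ∫⁻ y in Ioo 0 R, ENNReal.ofReal (y ^ 3) * ENNReal.ofReal ‖weightProfile β χ y‖ ≤
      ENNReal.ofReal (1 + ∫ t in Ioc 1 R, t ^ 3 * χ t) := by
  have h01 := lintegral_weightProfile_le_of_le_one (χ := χ) hβ0 hβ1 one_pos le_rfl
  rw [div_one, log_exp, one_rpow, one_pow, mul_one] at h01
  refine lintegral_Ioo_le_add_integral_Ioc hR (hχc.mono fun t ht => ht.1)
    (fun t ht => (hχpos t ht.1).le) (fun y hy => ?_) zero_le_one h01
  rw [weightProfile_of_one_le hy.1, Real.norm_of_nonneg (hχpos y hy.1).le,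
    ENNReal.ofReal_mul (pow_nonneg (by linarith [hy.1]) 3)]

theorem lintegral_inv_weightProfile_le_of_one_le (hχc : ContinuousOn χ (Ici 1))
    (hχpos : ∀ t, 1 ≤ t → 0 < χ t) (hβ0 : 0 ≤ β) (hR : 1 ≤ R) :
    ∫⁻ y in Ioo 0 R, ENNReal.ofReal (y ^ 3) * ENNReal.ofReal ‖(weightProfile β χ y)⁻¹‖ ≤
      ENNReal.ofReal (1 + ∫ t in Ioc 1 R, t ^ 3 / χ t) := by
  have h01 := lintegral_inv_weightProfile_le_of_le_one (χ := χ) hβ0 one_pos le_rfl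
  rw [div_one, log_exp, one_rpow, inv_one, one_pow, mul_one] at h01
  simp only [div_eq_mul_inv]
  refine lintegral_Ioo_le_add_integral_Ioc (g := fun t => (χ t)⁻¹) hR
    ((hχc.mono fun t ht => ht.1).inv₀ fun t ht => (hχpos t ht.1).ne')
    (fun t ht => (inv_pos.2 (hχpos t ht.1)).le) (fun y hy => ?_) zero_le_one h01
  rw [weightProfile_of_one_le hy.1, Real.norm_of_nonneg (inv_pos.2 (hχpos y hy.1)).le,
    ENNReal.ofReal_mul (pow_nonneg (by linarith [hy.1]) 3)]

end Moments

section Centered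

variable {β : ℝ} {χ : ℝ → ℝ} {c M : ℝ}

theorem integral_Ioc_pow_three_div_le (hc : 0 < c) (hcχ : ∀ t, 1 ≤ t → c ≤ χ t) {R : ℝ}
    (hR : 1 ≤ R) : ∫ t in Ioc 1 R, t ^ 3 / χ t ≤ R ^ 8 / c := by
  have hbound : ∀ t ∈ Ioc 1 R, |t ^ 3 / χ t| ≤ R ^ 3 / c := fun t ht => by
    have hχt := hcχ t ht.1.le
    rw [abs_of_nonneg (div_nonneg (pow_nonneg (by linarith [ht.1]) 3) (hc.le.trans hχt))]
    exact div_le_div₀ (by positivity) (pow_le_pow_left₀ (by linarith [ht.1]) ht.2 3) hc hχt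
  calc ∫ t in Ioc 1 R, t ^ 3 / χ t ≤ R ^ 3 / c * volume.real (Ioc 1 R) :=
        setIntegral_le_mul_measureReal measure_Ioc_lt_top.ne hbound
    _ = R ^ 3 * (R - 1) / c := by rw [Real.volume_real_Ioc_of_le hR]; ring
    _ ≤ R ^ 3 * R ^ 5 / c := by
        gcongr
        nlinarith [one_le_pow₀ (M₀ := ℝ) hR (n := 4), pow_succ R 4]
    _ = R ^ 8 / c := by ring

theorem exists_weightProfile_moment_bounds (hχc : ContinuousOn χ (Ici 1)) (hβ0 : 0 ≤ β)
    (hβ1 : β ≤ 1) (hc : 0 < c) (hcχ : ∀ t, 1 ≤ t → c ≤ χ t) (hM0 : 0 ≤ M)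
    (hprod : ∀ r : ℝ, 1 ≤ r → ((∫ t in Ioc (1 : ℝ) r, t ^ 3 * χ t) *
      (∫ t in Ioc (1 : ℝ) r, t ^ 3 / χ t)) / r ^ 8 ≤ M)
    (hmom : ∀ r : ℝ, 1 ≤ r → (∫ t in Ioc (1 : ℝ) r, t ^ 3 * χ t) / r ^ 8 ≤ M)
    {R : ℝ} (hR : 0 < R) :
    ∃ A B, 0 ≤ A ∧ 0 ≤ B ∧ A * B ≤ (1 + 1 / c + 2 * M) * R ^ 8 ∧
      ∫⁻ y in Ioo 0 R, ENNReal.ofReal (y ^ 3) * ENNReal.ofReal ‖weightProfile β χ y‖ ≤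
        ENNReal.ofReal A ∧
      ∫⁻ y in Ioo 0 R, ENNReal.ofReal (y ^ 3) * ENNReal.ofReal ‖(weightProfile β χ y)⁻¹‖ ≤
        ENNReal.ofReal B := by
  rcases le_or_gt R 1 with hR1 | hR1
  · have hL : 0 < log (exp 1 / R) ^ β :=
      rpow_pos_of_pos (by linarith [one_le_log_exp_one_div hR hR1]) β
    refine ⟨_, _, by positivity, by positivity, ?_,
      lintegral_weightProfile_le_of_le_one hβ0 hβ1 hR hR1,
      lintegral_inv_weightProfile_le_of_le_one hβ0 hR hR1⟩
    rw [mul_mul_mul_comm, mul_inv_cancel₀ hL.ne', one_mul, ← pow_add]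
    have : 0 ≤ 1 / c := by positivity
    nlinarith [pow_pos hR 8]
  set Bw := ∫ t in Ioc (1 : ℝ) R, t ^ 3 * χ t
  set Bi := ∫ t in Ioc (1 : ℝ) R, t ^ 3 / χ t
  have hχpos : ∀ t, 1 ≤ t → 0 < χ t := fun t ht => hc.trans_le (hcχ t ht)
  have hBw : 0 ≤ Bw := setIntegral_nonneg measurableSet_Ioc fun t ht =>
    mul_nonneg (pow_nonneg (by linarith [ht.1]) 3) (hχpos t ht.1.le).le
  have hBi : 0 ≤ Bi := setIntegral_nonneg measurableSet_Ioc fun t ht =>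
    div_nonneg (pow_nonneg (by linarith [ht.1]) 3) (hχpos t ht.1.le).le
  refine ⟨1 + Bw, 1 + Bi, by positivity, by positivity, ?_,
    lintegral_weightProfile_le_of_one_le hχc hχpos hβ0 hβ1 hR1.le,
    lintegral_inv_weightProfile_le_of_one_le hχc hχpos hβ0 hR1.le⟩
  have hR8 : 0 < R ^ 8 := by positivity
  have h1 : 1 ≤ R ^ 8 := one_le_pow₀ hR1.le
  have hBwM : Bw ≤ M * R ^ 8 := (div_le_iff₀ hR8).1 (hmom R hR1.le)
  have hprodM : Bw * Bi ≤ M * R ^ 8 := (div_le_iff₀ hR8).1 (hprod R hR1.le)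
  have hBic : Bi ≤ 1 / c * R ^ 8 := by
    rw [one_div_mul_eq_div]; exact integral_Ioc_pow_three_div_le hc hcχ hR1.le
  nlinarith

theorem setLIntegral_ball_comp_norm_le {q : ℝ → ℝ} (hq : Measurable q) {R A : ℝ}
    (h : ∫⁻ y in Ioo 0 R, ENNReal.ofReal (y ^ 3) * ENNReal.ofReal ‖q y‖ ≤ ENNReal.ofReal A) :
    ∫⁻ x in ball (0 : E4) R, ENNReal.ofReal ‖q ‖x‖‖ ≤
      ENNReal.ofReal (4 * volume.real (ball (0 : E4) 1) * A) := by
  rw [lintegral_ball_comp_norm volume hq.norm.ennreal_ofReal, finrank_euclideanSpace_fin,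
    ENNReal.ofReal_mul (by positivity), ENNReal.ofReal_mul (by positivity),
    ofReal_measureReal measure_ball_lt_top.ne]
  gcongr
  norm_num

end Centered

theorem exists_a2Product_omegaB_le_of_norm_le_two_mul {β : ℝ} {χ : ℝ → ℝ} {c M : ℝ}
    (hχc : ContinuousOn χ (Ici 1)) (hβ0 : 0 ≤ β) (hβ1 : β ≤ 1) (hc : 0 < c)
    (hcχ : ∀ t, 1 ≤ t → c ≤ χ t) (hM0 : 0 ≤ M)
    (hprod : ∀ r : ℝ, 1 ≤ r → ((∫ t in Ioc (1 : ℝ) r, t ^ 3 * χ t) *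
      (∫ t in Ioc (1 : ℝ) r, t ^ 3 / χ t)) / r ^ 8 ≤ M)
    (hmom : ∀ r : ℝ, 1 ≤ r → (∫ t in Ioc (1 : ℝ) r, t ^ 3 * χ t) / r ^ 8 ≤ M) :
    ∃ C, ∀ (x₀ : E4) (r : ℝ), 0 < r → ‖x₀‖ ≤ 2 * r →
      a2Product volume (omegaB β χ) (ball x₀ r) ≤ C := by
  set v := volume.real (ball (0 : E4) 1)
  have hmeas := measurable_weightProfile (β := β) hχc
  refine ⟨16 * v ^ 2 * (1 + 1 / c + 2 * M) * 3 ^ (2 * finrank ℝ E4) / v ^ 2,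
    fun x₀ r hr hx₀ => a2Product_ball_le_of_centered
      (fun x => omegaB_nonneg (fun t ht => hc.trans_le (hcχ t ht)) x) (fun R hR => ?_) hr hx₀⟩
  obtain ⟨A, B, hA, hB, hAB, hJ, hK⟩ :=
    exists_weightProfile_moment_bounds hχc hβ0 hβ1 hc hcχ hM0 hprod hmom hR
  have hv : 0 ≤ v := measureReal_nonneg
  simp only [omegaB_eq_weightProfile]
  refine ⟨4 * v * A, 4 * v * B, by positivity, by positivity, ?_,
    setLIntegral_ball_comp_norm_le hmeas hJ,
    setLIntegral_ball_comp_norm_le (q := fun t => (weightProfile β χ t)⁻¹) hmeas.inv hK⟩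
  rw [finrank_euclideanSpace_fin]
  calc 4 * v * A * (4 * v * B) = 16 * v ^ 2 * (A * B) := by ring
    _ ≤ 16 * v ^ 2 * ((1 + 1 / c + 2 * M) * R ^ 8) := by gcongr
    _ = _ := by ring

/-- under the three conditions on `χ`, the weight `ω_β` is in the
Muckenhoupt `A₂` class on `ℝ⁴`. -/
theorem stmt_5 (β : ℝ) (hβ : 0 < β ∧ β < 1) (χ : ℝ → ℝ) (hχ : ChiHyp χ)
    (hM : ∃ M > 0, ∀ r : ℝ, 1 ≤ r →
      ((∫ t in Set.Ioc (1 : ℝ) r, t ^ 3 * χ t) * (∫ t in Set.Ioc (1 : ℝ) r, t ^ 3 / χ t)) /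
          r ^ 8 ≤ M ∧
      (∫ t in Set.Ioc (1 : ℝ) r, t ^ 3 * χ t) / r ^ 8 ≤ M ∧
      sSup (χ '' Set.Icc r (4 * r)) / sInf (χ '' Set.Icc r (4 * r)) ≤ M) :
    ∃ C : ℝ, ∀ (x₀ : E4) (r : ℝ), 0 < r →
      (((volume (Metric.ball x₀ r)).toReal)⁻¹ * ∫ x in Metric.ball x₀ r, omegaB β χ x) *
        (((volume (Metric.ball x₀ r)).toReal)⁻¹ *
          ∫ x in Metric.ball x₀ r, (omegaB β χ x)⁻¹) ≤ C := by
  obtain ⟨hχc, hχ1, hχpos, c, hc, hcχ⟩ := hχ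
  obtain ⟨M, hM0, hM⟩ := hM
  obtain ⟨C₁, hfar⟩ := exists_a2Product_omegaB_le_of_le_half_norm hχc hχ1 hχpos hβ.1.le hβ.2.le
    hM0 fun r hr => (hM r hr).2.2
  obtain ⟨C₂, hnear⟩ := exists_a2Product_omegaB_le_of_norm_le_two_mul hχc hβ.1.le hβ.2.le hc hcχ
    hM0.le (fun r hr => (hM r hr).1) fun r hr => (hM r hr).2.1
  refine ⟨max C₁ C₂, fun x₀ r hr => ?_⟩
  show a2Product volume (omegaB β χ) (ball x₀ r) ≤ max C₁ C₂
  rcases le_or_gt r (‖x₀‖ / 2) with h | h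
  · exact (hfar x₀ r h).trans (le_max_left _ _)
  · exact (hnear x₀ r hr (by linarith)).trans (le_max_right _ _)

end
end

section
/- Let β ∈ (0,1) and let f satisfy condition (F1) with parameters c₀, p, q, α. Let r₁, r₂, r₃ > 1 satisfy 1/r₁ + 1/r₂ + 1/r₃ = 1. Let (u_n) and u be measurable functions on ℝ⁴ such that sup_n ∫_{ℝ⁴} ( e^{r₁ α |u_n|^{2/(1−β)}} − 1 ) dx < ∞, sup_n ‖u_n‖_{L^{r₂(q−1)}(ℝ⁴)} < ∞, sup_n ‖u_n‖_{L^p(ℝ⁴)} < ∞, and u_n → u both in L^p(ℝ⁴) and in L^{r₃}(ℝ⁴). Then ∫_{ℝ⁴} f(u_n)(u_n − u) dx → 0 as n → ∞. -/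
open MeasureTheory Real Filter Topology

noncomputable section

/-! By (F1), `|f(uₙ)(uₙ - u)|` is at most `c₀` times
`|uₙ|^{p-1} |uₙ - u| + |uₙ|^{q-1} (e^{α|uₙ|^s} - 1) |uₙ - u|`, `s = 2/(1-β)`. Apply Hölder to the
first term with exponents `(p', p)` and to the second with `(ρ, r₃)`, where `1/ρ = 1/r₁ + 1/r₂`.
Since `p > s` and `ρ < r₁`, both `|uₙ|^p` and `(|uₙ|^{q-1} (e^{α|uₙ|^s} - 1))^ρ` are pointwise
dominated by a multiple of `e^{r₁α|uₙ|^s} - 1`, so the exponential bound alone keeps the first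
Hölder factors bounded, while the second factors tend to `0`. -/

namespace Real

lemma exists_rpow_le_mul_exp_sub_one {a : ℝ} (ha : 1 ≤ a) :
    ∃ C, 0 ≤ C ∧ ∀ y, 0 ≤ y → y ^ a ≤ C * (exp y - 1) := by
  set k := ⌈a⌉₊
  have hk : (1 : ℝ) ≤ k.factorial := mod_cast Nat.one_le_iff_ne_zero.mpr (Nat.factorial_ne_zero k)
  refine ⟨2 * k.factorial, by positivity, fun y hy => ?_⟩
  have hexp := add_one_le_exp y
  rcases le_total y 1 with hy1 | hy1
  · calc y ^ a ≤ y ^ (1 : ℝ) := rpow_le_rpow_of_exponent_ge' hy hy1 zero_le_one ha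
      _ ≤ 1 * (exp y - 1) := by rw [rpow_one]; linarith
      _ ≤ 2 * k.factorial * (exp y - 1) := by gcongr <;> linarith
  · calc y ^ a ≤ y ^ (k : ℝ) := rpow_le_rpow_of_exponent_le hy1 (Nat.le_ceil a)
      _ ≤ k.factorial * exp y := by
          rw [rpow_natCast, ← div_le_iff₀' (by positivity)]
          exact pow_div_factorial_le_exp _ hy k
      _ ≤ 2 * k.factorial * (exp y - 1) := by nlinarith

lemma exists_rpow_le_mul_exp_mul_rpow_sub_one {c s m : ℝ} (hc : 0 < c) (hs : 0 < s)
    (hsm : s ≤ m) : ∃ C, 0 ≤ C ∧ ∀ t, 0 ≤ t → t ^ m ≤ C * (exp (c * t ^ s) - 1) := by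
  obtain ⟨C, hC, hCy⟩ := exists_rpow_le_mul_exp_sub_one ((one_le_div hs).mpr hsm)
  refine ⟨C / c ^ (m / s), by positivity, fun t ht => ?_⟩
  have hcm : 0 < c ^ (m / s) := by positivity
  calc t ^ m = (c * t ^ s) ^ (m / s) / c ^ (m / s) := by
        rw [mul_rpow hc.le (by positivity), ← rpow_mul ht, mul_div_cancel₀ _ hs.ne',
          mul_div_cancel_left₀ _ hcm.ne']
    _ ≤ C * (exp (c * t ^ s) - 1) / c ^ (m / s) := by gcongr; exact hCy _ (by positivity)
    _ = C / c ^ (m / s) * (exp (c * t ^ s) - 1) := by ring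

lemma exp_sub_one_rpow_le {x ρ : ℝ} (hx : 0 ≤ x) (hρ : 1 ≤ ρ) :
    (exp x - 1) ^ ρ ≤ exp (ρ * x) - 1 := by
  have h := add_rpow_le_rpow_add (sub_nonneg.mpr (one_le_exp hx)) zero_le_one hρ
  rw [sub_add_cancel, one_rpow, ← exp_mul, mul_comm] at h
  linarith

lemma exp_sub_one_le_mul_exp (y : ℝ) : exp y - 1 ≤ y * exp y := by
  have h := mul_le_mul_of_nonneg_right (one_sub_le_exp_neg y) (exp_pos y).le
  rw [← exp_add, neg_add_cancel, exp_zero] at h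
  linarith

/-- With `a = t ^ s`: `(e^{αa} - 1)^ρ ≤ ραa e^{ραa}`, and the polynomial factor `t^{Qρ} a` is
absorbed by `e^{(r - ρ)αa} - 1`. -/
lemma exists_rpow_mul_exp_sub_one_rpow_le {Q s α ρ r : ℝ} (hQ : 0 ≤ Q) (hs : 0 < s)
    (hα : 0 < α) (hρ : 1 ≤ ρ) (hρr : ρ < r) :
    ∃ C, 0 ≤ C ∧ ∀ t, 0 ≤ t →
      (t ^ Q * (exp (α * t ^ s) - 1)) ^ ρ ≤ C * (exp (r * α * t ^ s) - 1) := by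
  obtain ⟨C, hC, hCt⟩ := exists_rpow_le_mul_exp_mul_rpow_sub_one (m := Q * ρ + s)
    (mul_pos (sub_pos.mpr hρr) hα) hs (by nlinarith)
  refine ⟨ρ * α * C, by positivity, fun t ht => ?_⟩
  set a := t ^ s
  have ha : 0 ≤ a := by positivity
  calc (t ^ Q * (exp (α * a) - 1)) ^ ρ = t ^ (Q * ρ) * (exp (α * a) - 1) ^ ρ := by
        rw [mul_rpow (by positivity) (sub_nonneg.mpr (one_le_exp (by positivity))),
          ← rpow_mul ht]
    _ ≤ t ^ (Q * ρ) * (ρ * (α * a) * exp (ρ * (α * a))) := by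
        gcongr
        exact (exp_sub_one_rpow_le (by positivity) hρ).trans (exp_sub_one_le_mul_exp _)
    _ = ρ * α * (t ^ (Q * ρ + s) * exp (ρ * (α * a))) := by
        rw [rpow_add' ht (by positivity)]; ring
    _ ≤ ρ * α * (C * (exp ((r - ρ) * α * a) - 1) * exp (ρ * (α * a))) := by
        gcongr; exact hCt t ht
    _ = ρ * α * C * (exp (r * α * a) - exp (ρ * (α * a))) := by
        have : exp ((r - ρ) * α * a) * exp (ρ * (α * a)) = exp (r * α * a) := by
          rw [← exp_add]; ring_nf
        linear_combination ρ * α * C * this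
    _ ≤ ρ * α * C * (exp (r * α * a) - 1) := by
        gcongr; exact one_le_exp (by positivity)

end Real

section HolderBounds

variable {X : Type*} [MeasurableSpace X] {μ : Measure X}

lemma lintegral_ofReal_le_ofReal_mul {φ ψ : X → ℝ} {C : ℝ} (hC : 0 ≤ C)
    (hφψ : ∀ x, φ x ≤ C * ψ x) :
    ∫⁻ x, ENNReal.ofReal (φ x) ∂μ ≤ ENNReal.ofReal C * ∫⁻ x, ENNReal.ofReal (ψ x) ∂μ := by
  rw [← lintegral_const_mul' _ _ ENNReal.ofReal_ne_top]
  refine lintegral_mono fun x => ?_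
  rw [← ENNReal.ofReal_mul hC]
  exact ENNReal.ofReal_le_ofReal (hφψ x)

lemma lintegral_ofReal_mul_le_Lp_mul_Lq {a b : ℝ} (hab : a.HolderConjugate b) {g h : X → ℝ}
    (hg0 : 0 ≤ g) (hh0 : 0 ≤ h) (hg : AEMeasurable g μ) (hh : AEMeasurable h μ) :
    ∫⁻ x, ENNReal.ofReal (g x * h x) ∂μ ≤
      (∫⁻ x, ENNReal.ofReal (g x ^ a) ∂μ) ^ (1 / a) *
        (∫⁻ x, ENNReal.ofReal (h x ^ b) ∂μ) ^ (1 / b) := by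
  have H := ENNReal.lintegral_mul_le_Lp_mul_Lq μ hab hg.ennreal_ofReal hh.ennreal_ofReal
  simp only [Pi.mul_apply, ← ENNReal.ofReal_mul (hg0 _),
    ENNReal.ofReal_rpow_of_nonneg (hg0 _) hab.nonneg,
    ENNReal.ofReal_rpow_of_nonneg (hh0 _) hab.symm.nonneg] at H
  exact H

lemma tendsto_lintegral_ofReal_mul_nhds_zero {a b : ℝ} (hab : a.HolderConjugate b)
    {g h : ℕ → X → ℝ} (hg0 : ∀ n, 0 ≤ g n) (hh0 : ∀ n, 0 ≤ h n)
    (hg : ∀ n, AEMeasurable (g n) μ) (hh : ∀ n, AEMeasurable (h n) μ)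
    {B : ENNReal} (hB : B ≠ ⊤) (hgB : ∀ n, ∫⁻ x, ENNReal.ofReal (g n x ^ a) ∂μ ≤ B)
    (hh_lim : Tendsto (fun n => ∫⁻ x, ENNReal.ofReal (h n x ^ b) ∂μ) atTop (𝓝 0)) :
    Tendsto (fun n => ∫⁻ x, ENNReal.ofReal (g n x * h n x) ∂μ) atTop (𝓝 0) := by
  have hlim := (ENNReal.tendsto_const_mul_rpow_nhds_zero_of_pos
    (ENNReal.rpow_ne_top_of_nonneg (one_div_nonneg.mpr hab.nonneg) hB)
    (one_div_pos.mpr hab.symm.pos)).comp hh_lim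
  refine tendsto_of_tendsto_of_tendsto_of_le_of_le tendsto_const_nhds hlim (fun _ => zero_le)
    fun n => (lintegral_ofReal_mul_le_Lp_mul_Lq hab (hg0 n) (hh0 n) (hg n) (hh n)).trans ?_
  exact mul_le_mul_left (ENNReal.rpow_le_rpow (hgB n) (one_div_nonneg.mpr hab.nonneg)) _

lemma tendsto_integral_nhds_zero_of_lintegral {E : Type*} [NormedAddCommGroup E]
    [NormedSpace ℝ E] {ι : Type*} {l : Filter ι} {F : ι → X → E}
    (hF : Tendsto (fun i => ∫⁻ x, ENNReal.ofReal ‖F i x‖ ∂μ) l (𝓝 0)) :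
    Tendsto (fun i => ∫ x, F i x ∂μ) l (𝓝 0) :=
  squeeze_zero_norm (fun i => norm_integral_le_lintegral_norm (F i))
    (by simpa [Function.comp_def] using (ENNReal.tendsto_toReal ENNReal.zero_ne_top).comp hF)

variable {U : ℕ → X → ℝ} {u : X → ℝ}

lemma lintegral_comp_abs_le_of_le_exp {φ : ℝ → ℝ} {C c s : ℝ} {B : ENNReal} (hC : 0 ≤ C)
    (hφ : ∀ t, 0 ≤ t → φ t ≤ C * (exp (c * t ^ s) - 1))
    (hUB : ∀ n, ∫⁻ x, ENNReal.ofReal (exp (c * |U n x| ^ s) - 1) ∂μ ≤ B) (n : ℕ) :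
    ∫⁻ x, ENNReal.ofReal (φ |U n x|) ∂μ ≤ ENNReal.ofReal C * B :=
  (lintegral_ofReal_le_ofReal_mul hC fun _ => hφ _ (abs_nonneg _)).trans
    (mul_le_mul_right (hUB n) _)

lemma tendsto_lintegral_abs_rpow_sub_one_mul_nhds_zero {p : ℝ} (hp : 1 < p)
    (hU : ∀ n, AEMeasurable (U n) μ) (hu : AEMeasurable u μ) {B : ENNReal} (hB : B ≠ ⊤)
    (hUB : ∀ n, ∫⁻ x, ENNReal.ofReal (|U n x| ^ p) ∂μ ≤ B)
    (hconv : Tendsto (fun n => ∫⁻ x, ENNReal.ofReal (|U n x - u x| ^ p) ∂μ) atTop (𝓝 0)) :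
    Tendsto (fun n => ∫⁻ x, ENNReal.ofReal (|U n x| ^ (p - 1) * |U n x - u x|) ∂μ) atTop
      (𝓝 0) := by
  have hp' := (HolderConjugate.conjExponent hp).symm
  refine tendsto_lintegral_ofReal_mul_nhds_zero hp' (fun n x => by positivity)
    (fun n x => abs_nonneg _) (fun n => by fun_prop) (fun n => by fun_prop) hB
    (fun n => ?_) hconv
  simp_rw [← rpow_mul (abs_nonneg _), hp'.symm.sub_one_mul_conj]
  exact hUB n

lemma tendsto_lintegral_abs_rpow_mul_exp_sub_one_mul_nhds_zero {Q s α ρ r r₃ : ℝ}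
    (hQ : 0 ≤ Q) (hs : 0 < s) (hα : 0 < α) (hρ : ρ.HolderConjugate r₃) (hρr : ρ < r)
    (hU : ∀ n, AEMeasurable (U n) μ) (hu : AEMeasurable u μ) {B : ENNReal} (hB : B ≠ ⊤)
    (hUB : ∀ n, ∫⁻ x, ENNReal.ofReal (exp (r * α * |U n x| ^ s) - 1) ∂μ ≤ B)
    (hconv : Tendsto (fun n => ∫⁻ x, ENNReal.ofReal (|U n x - u x| ^ r₃) ∂μ) atTop (𝓝 0)) :
    Tendsto (fun n => ∫⁻ x, ENNReal.ofReal
      (|U n x| ^ Q * (exp (α * |U n x| ^ s) - 1) * |U n x - u x|) ∂μ) atTop (𝓝 0) := by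
  obtain ⟨C, hC, hCt⟩ := exists_rpow_mul_exp_sub_one_rpow_le hQ hs hα hρ.lt.le hρr
  exact tendsto_lintegral_ofReal_mul_nhds_zero hρ
    (fun n x => mul_nonneg (by positivity) (sub_nonneg.mpr (one_le_exp (by positivity))))
    (fun n x => abs_nonneg _) (fun n => by fun_prop) (fun n => by fun_prop)
    (ENNReal.mul_ne_top ENNReal.ofReal_ne_top hB)
    (lintegral_comp_abs_le_of_le_exp (φ := fun t => (t ^ Q * (exp (α * t ^ s) - 1)) ^ ρ)
      hC hCt hUB) hconv

lemma tendsto_integral_mul_sub_nhds_zero {f : ℝ → ℝ} {c₀ p q α s : ℝ} (hc₀ : 0 ≤ c₀)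
    (hα : 0 ≤ α)
    (hf : ∀ t, |f t| ≤ c₀ * (|t| ^ (p - 1) + |t| ^ (q - 1) * (exp (α * |t| ^ s) - 1)))
    (hU : ∀ n, AEMeasurable (U n) μ) (hu : AEMeasurable u μ)
    (hlow : Tendsto (fun n => ∫⁻ x, ENNReal.ofReal (|U n x| ^ (p - 1) * |U n x - u x|) ∂μ)
      atTop (𝓝 0))
    (hhigh : Tendsto (fun n => ∫⁻ x, ENNReal.ofReal
      (|U n x| ^ (q - 1) * (exp (α * |U n x| ^ s) - 1) * |U n x - u x|) ∂μ) atTop (𝓝 0)) :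
    Tendsto (fun n => ∫ x, f (U n x) * (U n x - u x) ∂μ) atTop (𝓝 0) := by
  refine tendsto_integral_nhds_zero_of_lintegral ?_
  have hlim := ENNReal.Tendsto.const_mul (hlow.add hhigh) (Or.inr ENNReal.ofReal_ne_top)
    (a := ENNReal.ofReal c₀)
  rw [add_zero, mul_zero] at hlim
  refine tendsto_of_tendsto_of_tendsto_of_le_of_le tendsto_const_nhds hlim (fun _ => zero_le)
    fun n => ?_
  rw [← lintegral_add_left' (by fun_prop)]
  calc ∫⁻ x, ENNReal.ofReal ‖f (U n x) * (U n x - u x)‖ ∂μ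
      ≤ ENNReal.ofReal c₀ * ∫⁻ x, ENNReal.ofReal (|U n x| ^ (p - 1) * |U n x - u x| +
          |U n x| ^ (q - 1) * (exp (α * |U n x| ^ s) - 1) * |U n x - u x|) ∂μ :=
        lintegral_ofReal_le_ofReal_mul hc₀ fun x => by
          rw [norm_mul, Real.norm_eq_abs, Real.norm_eq_abs, ← add_mul, ← mul_assoc]
          exact mul_le_mul_of_nonneg_right (hf _) (abs_nonneg _)
    _ = _ := by
        congr 1
        refine lintegral_congr fun x => ENNReal.ofReal_add (by positivity) ?_
        exact mul_nonneg (mul_nonneg (by positivity)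
          (sub_nonneg.mpr (one_le_exp (by positivity)))) (abs_nonneg _)

end HolderBounds

theorem stmt_16_general (β : ℝ) (hβ : 0 < β ∧ β < 1)
    (f : ℝ → ℝ)
    (c₀ p q α : ℝ) (hF1 : CondF1 β c₀ p q α f)
    (r₁ r₂ r₃ : ℝ) (hr₁ : 1 < r₁) (hr₂ : 1 < r₂) (hr₃ : 1 < r₃)
    (hr : 1 / r₁ + 1 / r₂ + 1 / r₃ = 1)
    (U : ℕ → E4 → ℝ) (u : E4 → ℝ) (hUm : ∀ n, Measurable (U n)) (hum : Measurable u)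
    (hexp : ∃ B : ℝ, ∀ n,
      (∫⁻ x : E4, ENNReal.ofReal (Real.exp (r₁ * α * |U n x| ^ (2 / (1 - β))) - 1)) ≤
        ENNReal.ofReal B)
    (hconvp : Tendsto (fun n => ∫⁻ x : E4, ENNReal.ofReal (|U n x - u x| ^ p)) atTop
      (nhds 0))
    (hconvr3 : Tendsto (fun n => ∫⁻ x : E4, ENNReal.ofReal (|U n x - u x| ^ r₃)) atTop
      (nhds 0)) :
    Tendsto (fun n => ∫ x : E4, f (U n x) * (U n x - u x)) atTop (nhds 0) := by
  obtain ⟨hc₀, hps, hqs, hα, hf⟩ := hF1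
  obtain ⟨B, hB⟩ := hexp
  set s := 2 / (1 - β)
  have hs : 1 < s := by rw [lt_div_iff₀ (by linarith [hβ.2])]; linarith [hβ.1]
  set ρ := (r₁⁻¹ + r₂⁻¹)⁻¹
  have hρr₁ : ρ < r₁ := (HolderTriple.of_pos (by linarith) (by linarith)).lt
  have hρ : ρ.HolderConjugate r₃ :=
    ⟨by simp only [ρ, inv_inv, inv_one]; linarith [one_div r₁, one_div r₂, one_div r₃],
      by positivity, by linarith⟩
  obtain ⟨Cp, hCp, hCpt⟩ := exists_rpow_le_mul_exp_mul_rpow_sub_one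
    (mul_pos (by linarith : 0 < r₁) hα) (by linarith) hps.le
  have hU : ∀ n, AEMeasurable (U n) := fun n => (hUm n).aemeasurable
  refine tendsto_integral_mul_sub_nhds_zero hc₀.le hα.le hf hU hum.aemeasurable ?_ ?_
  · exact tendsto_lintegral_abs_rpow_sub_one_mul_nhds_zero (by linarith) hU hum.aemeasurable
      (ENNReal.mul_ne_top ENNReal.ofReal_ne_top ENNReal.ofReal_ne_top)
      (lintegral_comp_abs_le_of_le_exp (φ := (· ^ p)) hCp hCpt hB) hconvp
  · exact tendsto_lintegral_abs_rpow_mul_exp_sub_one_mul_nhds_zero (by linarith)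
      (by linarith) hα hρ hρr₁ hU hum.aemeasurable ENNReal.ofReal_ne_top hB hconvr3

/-- convergence `∫ f(u_n)(u_n - u) dx → 0` under uniform exponential
and `L^r` bounds together with `L^p` and `L^{r₃}` convergence. -/
theorem stmt_16 (β : ℝ) (hβ : 0 < β ∧ β < 1)
    (f : ℝ → ℝ) (hfc : Continuous f) (hf0 : ∀ s ≤ 0, f s = 0)
    (c₀ p q α : ℝ) (hF1 : CondF1 β c₀ p q α f)
    (r₁ r₂ r₃ : ℝ) (hr₁ : 1 < r₁) (hr₂ : 1 < r₂) (hr₃ : 1 < r₃)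
    (hr : 1 / r₁ + 1 / r₂ + 1 / r₃ = 1)
    (U : ℕ → E4 → ℝ) (u : E4 → ℝ) (hUm : ∀ n, Measurable (U n)) (hum : Measurable u)
    (hexp : ∃ B : ℝ, ∀ n,
      (∫⁻ x : E4, ENNReal.ofReal (Real.exp (r₁ * α * |U n x| ^ (2 / (1 - β))) - 1)) ≤
        ENNReal.ofReal B)
    (hLr2 : ∃ B : ENNReal, ∀ n,
      (∫⁻ x : E4, ENNReal.ofReal (|U n x| ^ (r₂ * (q - 1)))) ≤ B)
    (hLp : ∃ B : ENNReal, ∀ n, (∫⁻ x : E4, ENNReal.ofReal (|U n x| ^ p)) ≤ B)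
    (hconvp : Tendsto (fun n => ∫⁻ x : E4, ENNReal.ofReal (|U n x - u x| ^ p)) atTop
      (nhds 0))
    (hconvr3 : Tendsto (fun n => ∫⁻ x : E4, ENNReal.ofReal (|U n x - u x| ^ r₃)) atTop
      (nhds 0)) :
    Tendsto (fun n => ∫ x : E4, f (U n x) * (U n x - u x)) atTop (nhds 0) :=
  stmt_16_general β hβ f c₀ p q α hF1 r₁ r₂ r₃ hr₁ hr₂ hr₃ hr U u hUm hum hexp hconvp hconvr3
end
end
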